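/- arXiv:2311.10285 — 3 statements merged into one kernel-verified Lean document; each statement's English description precedes it below -/
import Mathlib

section
/- For any real x > 0 and any ε > 0, the integral (1/2πi) ∫_{ε-i∞}^{ε+i∞} x^s / s^2 ds equals 0 if 0 < x ≤ 1, and equals log x if x > 1. -/
/-!
The function `u ↦ log⁺ (1/u)` has Mellin transform `1/s²` on `Re s > 0`: it is `-log u` times the
indicator of `(0, 1]`, whose Mellin transform `1/s` has `s`-derivative `-1/s²`, and differentiating
the Mellin transform in `s` multiplies the function by `log u`. Mellin inversion at `u = 1/x`, on
the line `Re s = ε` where `1/s²` is integrable, then returns `log⁺ x`.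
-/
open Complex MeasureTheory Set Filter Asymptotics Topology

theorem HasMellin.congr_Ioi {E : Type*} [NormedAddCommGroup E] [NormedSpace ℂ E] {f g : ℝ → E}
    {s : ℂ} {m : E} (hf : HasMellin f s m) (hfg : EqOn f g (Ioi 0)) : HasMellin g s m := by
  have hfg' : EqOn (fun t : ℝ => (t : ℂ) ^ (s - 1) • f t) (fun t => (t : ℂ) ^ (s - 1) • g t)
      (Ioi 0) := fun t ht => by simp only [hfg ht]
  exact ⟨hf.1.congr_fun hfg' measurableSet_Ioi,
    (setIntegral_congr_fun measurableSet_Ioi hfg').symm.trans hf.2⟩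

theorem hasMellin_log_smul_indicator_Ioc {s : ℂ} (hs : 0 < s.re) :
    HasMellin (fun t : ℝ => Real.log t • (Ioc 0 1).indicator (fun _ => (1 : ℂ)) t) s
      (-(1 / s ^ 2)) := by
  set χ := (Ioc (0 : ℝ) 1).indicator (fun _ => (1 : ℂ))
  have hχ_loc : LocallyIntegrableOn χ (Ioi 0) :=
    ((integrableOn_const (by simp)).integrable_indicator
      measurableSet_Ioc).locallyIntegrable.locallyIntegrableOn _
  have hχ_top : χ =O[atTop] (· ^ (-(s.re + 1))) := by
    refine (isBigO_zero _ _).congr' ?_ EventuallyEq.rfl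
    filter_upwards [eventually_gt_atTop 1] with t ht
    simp [χ, ht.not_ge]
  have hχ_bot : χ =O[𝓝[>] 0] (· ^ (-0 : ℝ)) := by
    refine IsBigO.of_bound 1 (Eventually.of_forall fun t => ?_)
    simpa [χ] using norm_indicator_le_norm_self (fun _ => (1 : ℂ)) t
  obtain ⟨hconv, hderiv⟩ :=
    mellin_hasDerivAt_of_isBigO_rpow hχ_loc hχ_top (lt_add_one _) hχ_bot hs
  have hmellin : mellin χ =ᶠ[𝓝 s] fun z => z⁻¹ := by
    filter_upwards [(isOpen_lt continuous_const continuous_re).mem_nhds hs] with z hz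
    simpa using (hasMellin_one_Ioc hz).2
  have hs0 : s ≠ 0 := by rintro rfl; simp at hs
  refine ⟨hconv, hderiv.unique ?_⟩
  simpa using (hasDerivAt_inv hs0).congr_of_eventuallyEq hmellin

theorem posLog_inv_eq_neg_log_smul_indicator {t : ℝ} (ht : 0 < t) :
    (Real.posLog t⁻¹ : ℂ) = -(Real.log t • (Ioc 0 1).indicator (fun _ => (1 : ℂ)) t) := by
  have habs : |t⁻¹| = t⁻¹ := abs_of_pos (inv_pos.2 ht)
  rcases le_or_gt t 1 with h | h
  · rw [indicator_of_mem (show t ∈ Ioc 0 1 from ⟨ht, h⟩),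
      Real.posLog_eq_log (by rw [habs]; exact one_le_inv_iff₀.2 ⟨ht, h⟩), Real.log_inv]
    simp
  · rw [indicator_of_notMem (fun h' => h.not_ge h'.2),
      (Real.posLog_eq_zero_iff _).2 (by rw [habs]; exact inv_le_one_of_one_le₀ h.le)]
    simp

theorem hasMellin_posLog_inv {s : ℂ} (hs : 0 < s.re) :
    HasMellin (fun t : ℝ => (Real.posLog t⁻¹ : ℂ)) s (1 / s ^ 2) := by
  obtain ⟨hconv, hmellin⟩ := hasMellin_log_smul_indicator_Ioc hs
  have hneg := hasMellin_const_smul hconv (-1 : ℂ)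
  rw [hmellin, neg_one_smul, neg_neg] at hneg
  exact hneg.congr_Ioi fun t ht =>
    (neg_one_smul ℂ _).trans (posLog_inv_eq_neg_log_smul_indicator ht).symm

theorem verticalIntegrable_one_div_sq {σ : ℝ} (hσ : σ ≠ 0) :
    VerticalIntegrable (fun s : ℂ => 1 / s ^ 2) σ := by
  have hbound : Integrable fun y : ℝ => (σ ^ 2)⁻¹ * (1 + (y / σ) ^ 2)⁻¹ :=
    (integrable_inv_one_add_sq.comp_div hσ).const_mul _
  refine hbound.mono' (Measurable.aestronglyMeasurable (by fun_prop))
    (Eventually.of_forall fun y => le_of_eq ?_)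
  rw [norm_div, norm_one, norm_pow, ← normSq_eq_norm_sq, normSq_add_mul_I]
  field_simp

theorem posLog_eq_ite_of_pos (x : ℝ) (hx : 0 < x) :
    Real.posLog x = if x ≤ 1 then 0 else Real.log x := by
  split_ifs with h
  · exact (Real.posLog_eq_zero_iff x).2 (by rwa [abs_of_pos hx])
  · exact Real.posLog_eq_log (by rw [abs_of_pos hx]; exact (not_le.1 h).le)

/-- For x > 0 and ε > 0, (1/2πi) ∫_{Re s = ε} x^s/s² ds equals 0 if x ≤ 1 and log x if x > 1. -/
theorem stmt_0 (x ε : ℝ) (hx : 0 < x) (hε : 0 < ε) :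
    (1 / (2 * Real.pi * Complex.I)) *
      ∫ t : ℝ, (x : ℂ) ^ ((ε : ℂ) + t * Complex.I) / ((ε : ℂ) + t * Complex.I) ^ 2 * Complex.I
    = if x ≤ 1 then 0 else (Real.log x : ℂ) := by
  set f : ℝ → ℂ := fun t => (Real.posLog t⁻¹ : ℂ)
  have hM (y : ℝ) : HasMellin f (ε + y * I) (1 / (ε + y * I) ^ 2) :=
    hasMellin_posLog_inv (by simpa using hε)
  have hVI : VerticalIntegrable (mellin f) ε :=
    (verticalIntegrable_one_div_sq hε.ne').congr (Eventually.of_forall fun y => (hM y).2.symm)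
  have hinv := mellinInv_mellin_eq ε f (inv_pos.2 hx) (by simpa using (hM 0).1) hVI
    (by simp only [f]; fun_prop (disch := positivity))
  have hx_arg : (x : ℂ).arg ≠ Real.pi := by
    rw [arg_ofReal_of_nonneg hx.le]; exact Real.pi_ne_zero.symm
  calc _ = (1 / (2 * Real.pi) : ℝ) •
        ∫ y : ℝ, (x : ℂ) ^ ((ε : ℂ) + y * I) / ((ε : ℂ) + y * I) ^ 2 := by
        rw [integral_mul_const, real_smul]
        push_cast
        field_simp
    _ = mellinInv ε (mellin f) x⁻¹ := by
        rw [mellinInv]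
        congr 2 with y
        rw [(hM y).2, ofReal_inv, inv_cpow _ _ hx_arg, cpow_neg, inv_inv, smul_eq_mul, mul_one_div]
    _ = (Real.posLog x⁻¹⁻¹ : ℂ) := hinv
    _ = _ := by rw [inv_inv, posLog_eq_ite_of_pos x hx, apply_ite ofReal, ofReal_zero]
end

section
/- Let q ≥ 1 and let χ₀ be the principal Dirichlet character mod q. Then for real x ≥ 2, ∑_{d ≤ x} (d²/φ(d)³) χ₀(d) ≤ (φ(q)/q) · (log x) · ∏_p (1 + (3p² - 3p + 1)/(p⁴ - 3p³ + 3p² - p)) · (1 + o(1)) as x → ∞, where the product is over all primes. -/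
/-!
With `ψ(p) = (3p² - 3p + 1)/(p⁴ - 3p³ + 3p² - p)` one has `1 + p ψ(p) = (1 - 1/p)⁻³`, so expanding
`d³/φ(d)³ = ∏_{p ∣ d} (1 + p ψ(p))` over the squarefree divisors of `d` gives
`d²/φ(d)³ = ∑_{ab = d} a⁻¹ μ(b)² ψ(b)`. Summing over `d ≤ x` coprime to `q` and relaxing `ab ≤ x`
to `a, b ≤ x` bounds the sum by `(∑_{a ≤ x, (a,q) = 1} 1/a) · ∑_{b ≤ x} μ(b)² ψ(b)`. The squarefree
sum is part of the expansion of the Euler product `∏_p (1 + ψ(p))`, and Möbius inversion over the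
divisors of `q` together with `harmonic n = log n + O(1)` gives
`∑_{a ≤ x, (a,q) = 1} 1/a = (φ(q)/q) log x + O_q(1)`.
-/

open Finset Filter
open scoped ArithmeticFunction.Moebius

theorem Nat.prod_primeFactors_one_add {R : Type*} [CommSemiring R] (f : ℕ → R) {n : ℕ}
    (hn : n ≠ 0) :
    ∏ p ∈ n.primeFactors, (1 + f p)
      = ∑ d ∈ n.divisors with Squarefree d, ∏ p ∈ d.primeFactors, f p := by
  rw [Nat.sum_divisors_filter_squarefree hn, Finset.prod_one_add, Nat.factors_eq,
    List.toFinset_coe, Nat.toFinset_factors]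
  refine sum_congr rfl fun s hs => ?_
  rw [Finset.prod_val, show s.prod id = ∏ p ∈ s, p from rfl, Nat.primeFactors_prod fun p hp =>
    Nat.prime_of_mem_primeFactors (mem_powerset.mp hs hp)]

theorem sum_squarefree_prod_primeFactors_le_tprod {f : ℕ → ℝ} (hf : ∀ p : Nat.Primes, 0 ≤ f p)
    (hsum : Summable fun p : Nat.Primes => f p) (s : Finset ℕ) :
    ∑ b ∈ s with Squarefree b, ∏ p ∈ b.primeFactors, f p ≤ ∏' p : Nat.Primes, (1 + f p) := by
  let primes (b : ℕ) : Finset Nat.Primes := b.primeFactors.subtype Nat.Prime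
  have hprimes (b : ℕ) : (primes b).map (.subtype _) = b.primeFactors :=
    subtype_map_of_mem fun _ => Nat.prime_of_mem_primeFactors
  have hinj {b c : ℕ} (hb : Squarefree b) (hc : Squarefree c) (hbc : primes b = primes c) :
      b = c := by
    rw [← Nat.prod_primeFactors_of_squarefree hb, ← Nat.prod_primeFactors_of_squarefree hc,
      ← hprimes, ← hprimes, hbc]
  have hsummable := summable_finsetProd_of_summable_nonneg hf hsum
  rw [tprod_one_add hsummable]
  calc ∑ b ∈ s with Squarefree b, ∏ p ∈ b.primeFactors, f p
      = ∑ b ∈ s with Squarefree b, ∏ p ∈ primes b, f p :=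
        sum_congr rfl fun b _ => (prod_subtype_of_mem f fun _ => Nat.prime_of_mem_primeFactors).symm
    _ = ∑ t ∈ (s.filter Squarefree).image primes, ∏ p ∈ t, f p := by
        rw [sum_image fun _ hb _ hc => hinj (mem_filter.mp hb).2 (mem_filter.mp hc).2]
    _ ≤ _ := hsummable.sum_le_tsum _ fun t _ => prod_nonneg fun p _ => hf p

theorem sum_Icc_sum_divisorsAntidiagonal_le {M : Type*} [AddCommMonoid M] [PartialOrder M]
    [IsOrderedAddMonoid M] {h : ℕ × ℕ → M} (hh : ∀ x, 0 ≤ h x) (N : ℕ) :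
    ∑ n ∈ Icc 1 N, ∑ x ∈ n.divisorsAntidiagonal, h x ≤ ∑ x ∈ Icc 1 N ×ˢ Icc 1 N, h x :=
  calc ∑ n ∈ Icc 1 N, ∑ x ∈ n.divisorsAntidiagonal, h x
      = ∑ n ∈ Icc 1 N, ∑ x ∈ Icc 1 N ×ˢ Icc 1 N with x.1 * x.2 = n, h x := by
        refine sum_congr rfl fun n hn => ?_
        rw [mem_Icc] at hn
        rw [Nat.divisorsAntidiagonal_eq_prod_filter_of_le (by omega) hn.2,
          ← Finset.Icc_add_one_left_eq_Ioc, zero_add]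
    _ ≤ _ := sum_fiberwise_le_sum_of_sum_fiber_nonneg fun _ _ => sum_nonneg fun x _ => hh x

theorem sum_Icc_filter_dvd {M : Type*} [AddCommMonoid M] (f : ℕ → M) {e : ℕ} (he : e ≠ 0)
    (N : ℕ) : ∑ a ∈ Icc 1 N with e ∣ a, f a = ∑ m ∈ Icc 1 (N / e), f (e * m) := by
  have : (Icc 1 N).filter (e ∣ ·) = (Icc 1 (N / e)).image (e * ·) := by
    ext a
    simp only [mem_filter, mem_Icc, mem_image]
    constructor
    · rintro ⟨⟨ha1, haN⟩, m, rfl⟩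
      refine ⟨m, ⟨Nat.pos_of_mul_pos_left ha1, ?_⟩, rfl⟩
      rwa [Nat.le_div_iff_mul_le (Nat.pos_of_ne_zero he), mul_comm]
    · rintro ⟨m, ⟨hm1, hmN⟩, rfl⟩
      refine ⟨⟨Nat.mul_pos (Nat.pos_of_ne_zero he) hm1, ?_⟩, dvd_mul_right e m⟩
      rwa [Nat.le_div_iff_mul_le (Nat.pos_of_ne_zero he), mul_comm] at hmN
  rw [this, sum_image fun a _ b _ hab => Nat.eq_of_mul_eq_mul_left (Nat.pos_of_ne_zero he) hab]

theorem sum_divisors_filter_dvd_moebius {R : Type*} [Ring R] {q : ℕ} (hq : q ≠ 0) (a : ℕ) :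
    ∑ e ∈ q.divisors with e ∣ a, (μ e : R) = if a.Coprime q then 1 else 0 := by
  have hgcd : {e ∈ q.divisors | e ∣ a} = (a.gcd q).divisors := by
    rw [← Nat.divisors_filter_dvd_of_dvd hq (Nat.gcd_dvd_right a q)]
    exact filter_congr fun e he => by simp [Nat.dvd_gcd_iff, Nat.dvd_of_mem_divisors he]
  have h := congrArg (· (a.gcd q)) (ArithmeticFunction.coe_moebius_mul_coe_zeta (R := R))
  simp only [ArithmeticFunction.coe_mul_zeta_apply, ArithmeticFunction.intCoe_apply,
    ArithmeticFunction.one_apply] at h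
  rw [hgcd, h]

theorem sum_divisors_moebius_div_eq_totient_div (n : ℕ) (hn : n ≠ 0) :
    ∑ e ∈ n.divisors, (μ e : ℝ) / e = n.totient / n := by
  have h := (ArithmeticFunction.sum_eq_iff_sum_smul_moebius_eq (f := fun n => (n.totient : ℝ))
    (g := fun n => (n : ℝ))).mp (fun n _ => by exact_mod_cast Nat.sum_totient n) n
    (Nat.pos_of_ne_zero hn)
  rw [← h, Nat.sum_divisorsAntidiagonal (fun a b => μ a • (b : ℝ)), sum_div]
  refine sum_congr rfl fun e he => ?_
  have hen : e ∣ n := Nat.dvd_of_mem_divisors he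
  have he0 : (e : ℝ) ≠ 0 := by exact_mod_cast Nat.pos_of_mem_divisors he |>.ne'
  rw [zsmul_eq_mul, Nat.cast_div hen he0]
  field_simp

theorem abs_harmonic_floor_div_sub_log_le {x e : ℝ} (hx : 1 ≤ x) (he : 1 ≤ e) :
    |(harmonic ⌊x / e⌋₊ : ℝ) - Real.log x| ≤ 1 + Real.log e := by
  have hloge := Real.log_nonneg he
  have hlower : Real.log x - Real.log e ≤ harmonic ⌊x / e⌋₊ := by
    rw [← Real.log_div (by positivity) (by positivity)]
    exact log_le_harmonic_floor _ (by positivity)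
  have hupper : (harmonic ⌊x / e⌋₊ : ℝ) ≤ 1 + Real.log x := by
    rcases le_or_gt 1 (x / e) with h | h
    · refine (harmonic_floor_le_one_add_log _ h).trans ?_
      gcongr
      exact div_le_self (by positivity) he
    · rw [Nat.floor_eq_zero.mpr h, harmonic_zero, Rat.cast_zero]
      linarith [Real.log_nonneg hx]
  rw [abs_le]
  constructor <;> linarith

theorem sum_Icc_coprime_inv_eq {q : ℕ} (hq : q ≠ 0) (N : ℕ) :
    ∑ a ∈ Icc 1 N with a.Coprime q, (a : ℝ)⁻¹
      = ∑ e ∈ q.divisors, (μ e : ℝ) / e * (harmonic (N / e) : ℝ) :=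
  calc ∑ a ∈ Icc 1 N with a.Coprime q, (a : ℝ)⁻¹
      = ∑ a ∈ Icc 1 N, ∑ e ∈ q.divisors with e ∣ a, (μ e : ℝ) * (a : ℝ)⁻¹ := by
        rw [sum_filter]
        refine sum_congr rfl fun a _ => ?_
        rw [← sum_mul, sum_divisors_filter_dvd_moebius hq]
        split_ifs <;> simp
    _ = ∑ e ∈ q.divisors, ∑ a ∈ Icc 1 N with e ∣ a, (μ e : ℝ) * (a : ℝ)⁻¹ :=
        sum_comm' fun (a e : ℕ) => by simp only [mem_filter]; tauto
    _ = ∑ e ∈ q.divisors, (μ e : ℝ) / e * (harmonic (N / e) : ℝ) := by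
        refine sum_congr rfl fun e he => ?_
        rw [sum_Icc_filter_dvd _ (Nat.pos_of_mem_divisors he).ne', harmonic_eq_sum_Icc,
          Rat.cast_sum, mul_sum]
        refine sum_congr rfl fun m _ => ?_
        push_cast
        ring

theorem abs_sum_Icc_coprime_inv_sub_le {q : ℕ} (hq : q ≠ 0) {x : ℝ} (hx : 1 ≤ x) :
    |∑ a ∈ Icc 1 ⌊x⌋₊ with a.Coprime q, (a : ℝ)⁻¹ - q.totient / q * Real.log x|
      ≤ ∑ e ∈ q.divisors, (1 + Real.log e) := by
  rw [sum_Icc_coprime_inv_eq hq, ← sum_divisors_moebius_div_eq_totient_div q hq, sum_mul,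
    ← sum_sub_distrib]
  refine (abs_sum_le_sum_abs _ _).trans (sum_le_sum fun e he => ?_)
  have he1 : (1 : ℝ) ≤ e := by exact_mod_cast Nat.pos_of_mem_divisors he
  have hμ : |(μ e : ℝ) / e| ≤ 1 := by
    rw [abs_div, Nat.abs_cast, div_le_one (by positivity)]
    exact (by exact_mod_cast ArithmeticFunction.abs_moebius_le_one : |(μ e : ℝ)| ≤ 1).trans he1
  rw [← Nat.floor_div_natCast, ← mul_sub, abs_mul]
  simpa using mul_le_mul hμ (abs_harmonic_floor_div_sub_log_le hx he1) (abs_nonneg _) zero_le_one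

noncomputable def psi (n : ℕ) : ℝ :=
  (3 * (n : ℝ) ^ 2 - 3 * n + 1) / ((n : ℝ) ^ 4 - 3 * (n : ℝ) ^ 3 + 3 * (n : ℝ) ^ 2 - n)

/-- The paper's `μ(b)² ψ(b)`, with `ψ` extended completely multiplicatively. -/
noncomputable def psiSquarefree (b : ℕ) : ℝ :=
  if Squarefree b then ∏ p ∈ b.primeFactors, psi p else 0

theorem psi_eq (n : ℕ) : psi n = (3 * (n : ℝ) ^ 2 - 3 * n + 1) / (n * (n - 1) ^ 3) := by
  rw [psi]
  ring_nf

theorem psi_nonneg (n : ℕ) : 0 ≤ psi n := by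
  rw [psi_eq]
  refine div_nonneg (by nlinarith [sq_nonneg ((n : ℝ) - 1)]) ?_
  rcases n with _ | n
  · simp
  · push_cast
    rw [add_sub_cancel_right]
    positivity

theorem psi_le {n : ℕ} (hn : 2 ≤ n) : psi n ≤ 24 * (1 / (n : ℝ) ^ 2) := by
  have h2 : (2 : ℝ) ≤ n := by exact_mod_cast hn
  have hden : 0 < (n : ℝ) * (n - 1) ^ 3 := mul_pos (by linarith) (pow_pos (by linarith) 3)
  rw [psi_eq, mul_one_div, div_le_div_iff₀ hden (by positivity)]
  nlinarith [mul_nonneg (by linarith : (0 : ℝ) ≤ n) (sq_nonneg ((n : ℝ) - 2)),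
    sq_nonneg ((n : ℝ) - 2)]

theorem one_add_mul_psi {p : ℕ} (hp : 2 ≤ p) : 1 + p * psi p = (1 - (p : ℝ)⁻¹)⁻¹ ^ 3 := by
  have h2 : (2 : ℝ) ≤ p := by exact_mod_cast hp
  have h1 : (p : ℝ) - 1 ≠ 0 := by linarith
  rw [psi_eq]
  field_simp
  ring

theorem summable_psi : Summable fun p : Nat.Primes => psi p :=
  .of_nonneg_of_le (fun p => psi_nonneg p) (fun p => psi_le p.2.two_le)
    (((Real.summable_one_div_nat_pow.mpr one_lt_two).mul_left 24).comp_injective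
      Nat.Primes.coe_nat_injective)

theorem psiSquarefree_nonneg (b : ℕ) : 0 ≤ psiSquarefree b := by
  unfold psiSquarefree
  split_ifs
  · exact prod_nonneg fun p _ => psi_nonneg p
  · exact le_rfl

theorem sum_psiSquarefree_le_tprod (s : Finset ℕ) :
    ∑ b ∈ s, psiSquarefree b ≤ ∏' p : Nat.Primes, (1 + psi p) := by
  unfold psiSquarefree
  rw [← sum_filter]
  exact sum_squarefree_prod_primeFactors_le_tprod (fun p => psi_nonneg p) summable_psi s

theorem sum_divisors_mul_psiSquarefree {d : ℕ} (hd : d ≠ 0) :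
    ∑ b ∈ d.divisors, b * psiSquarefree b = ((d : ℝ) / d.totient) ^ 3 :=
  calc ∑ b ∈ d.divisors, b * psiSquarefree b
      = ∑ b ∈ d.divisors with Squarefree b, ∏ p ∈ b.primeFactors, (p * psi p) := by
        rw [sum_filter]
        refine sum_congr rfl fun b _ => ?_
        unfold psiSquarefree
        split_ifs with hb
        · rw [prod_mul_distrib, ← Nat.cast_prod, Nat.prod_primeFactors_of_squarefree hb]
        · exact mul_zero _
    _ = ∏ p ∈ d.primeFactors, (1 - (p : ℝ)⁻¹)⁻¹ ^ 3 := by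
        rw [← Nat.prod_primeFactors_one_add _ hd]
        exact prod_congr rfl fun p hp => one_add_mul_psi (Nat.prime_of_mem_primeFactors hp).two_le
    _ = ((d : ℝ) / d.totient) ^ 3 := by
        have h := congrArg (Rat.cast (K := ℝ)) (Nat.totient_eq_mul_prod_factors d)
        push_cast at h
        rw [h, div_mul_cancel_left₀ (by exact_mod_cast hd), prod_pow, prod_inv_distrib]

theorem sq_div_totient_cube_eq {d : ℕ} (hd : d ≠ 0) :
    (d : ℝ) ^ 2 / d.totient ^ 3
      = ∑ x ∈ d.divisorsAntidiagonal, (x.1 : ℝ)⁻¹ * psiSquarefree x.2 := by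
  have hd' : (d : ℝ) ≠ 0 := by exact_mod_cast hd
  calc (d : ℝ) ^ 2 / d.totient ^ 3 = (d : ℝ)⁻¹ * ((d : ℝ) / d.totient) ^ 3 := by
        field_simp
    _ = ∑ x ∈ d.divisorsAntidiagonal, (d : ℝ)⁻¹ * (x.2 * psiSquarefree x.2) := by
        rw [← sum_divisors_mul_psiSquarefree hd, mul_sum,
          Nat.sum_divisorsAntidiagonal' fun _ b => (d : ℝ)⁻¹ * (b * psiSquarefree b)]
    _ = ∑ x ∈ d.divisorsAntidiagonal, (x.1 : ℝ)⁻¹ * psiSquarefree x.2 := by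
        refine sum_congr rfl fun x hx => ?_
        obtain ⟨hx, -⟩ := Nat.mem_divisorsAntidiagonal.mp hx
        have hx2 : (x.2 : ℝ) ≠ 0 := by exact_mod_cast right_ne_zero_of_mul (hx ▸ hd)
        rw [← hx, Nat.cast_mul]
        field_simp

theorem sum_sq_div_totient_cube_le (q N : ℕ) :
    ∑ d ∈ Icc 1 N, (d : ℝ) ^ 2 / d.totient ^ 3 * (if d.Coprime q then 1 else 0)
      ≤ (∑ a ∈ Icc 1 N with a.Coprime q, (a : ℝ)⁻¹) * ∑ b ∈ Icc 1 N, psiSquarefree b := by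
  set A : ℕ → ℝ := fun a => if a.Coprime q then (a : ℝ)⁻¹ else 0
  have hA : ∀ a, 0 ≤ A a := fun a => by positivity
  calc ∑ d ∈ Icc 1 N, (d : ℝ) ^ 2 / d.totient ^ 3 * (if d.Coprime q then 1 else 0)
      ≤ ∑ d ∈ Icc 1 N, ∑ x ∈ d.divisorsAntidiagonal, A x.1 * psiSquarefree x.2 := by
        refine sum_le_sum fun d hd => ?_
        have hd0 : d ≠ 0 := by have := (mem_Icc.mp hd).1; omega
        split_ifs with hdq
        · rw [mul_one, sq_div_totient_cube_eq hd0]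
          refine le_of_eq (sum_congr rfl fun x hx => ?_)
          have hxq : x.1.Coprime q :=
            hdq.coprime_dvd_left (Dvd.intro _ (Nat.mem_divisorsAntidiagonal.mp hx).1)
          simp [A, hxq]
        · rw [mul_zero]
          exact sum_nonneg fun x _ => mul_nonneg (hA _) (psiSquarefree_nonneg _)
    _ ≤ ∑ x ∈ Icc 1 N ×ˢ Icc 1 N, A x.1 * psiSquarefree x.2 :=
        sum_Icc_sum_divisorsAntidiagonal_le (fun x => mul_nonneg (hA _) (psiSquarefree_nonneg _)) N
    _ = _ := by rw [sum_product, sum_filter, sum_mul_sum]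

/-- For q ≥ 1 and χ₀ the principal character mod q (indicator of coprimality to q):
∑_{d ≤ x} (d²/φ(d)³) χ₀(d) ≤ (φ(q)/q)(log x) ∏_p (1 + (3p²-3p+1)/(p⁴-3p³+3p²-p)) (1+o(1)). -/
theorem stmt_16 (q : ℕ) (hq : 1 ≤ q) :
    ∃ E : ℝ → ℝ, Tendsto E atTop (nhds 0) ∧ ∀ x : ℝ, 2 ≤ x →
      ∑ d ∈ Finset.Icc 1 ⌊x⌋₊,
          ((d : ℝ)^2 / (Nat.totient d : ℝ)^3) * (if Nat.Coprime d q then 1 else 0)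
        ≤ ((Nat.totient q : ℝ) / q) * Real.log x *
            (∏' p : Nat.Primes,
              (1 + (3 * ((p : ℕ) : ℝ)^2 - 3 * ((p : ℕ) : ℝ) + 1) /
                (((p : ℕ) : ℝ)^4 - 3 * ((p : ℕ) : ℝ)^3 + 3 * ((p : ℕ) : ℝ)^2 - ((p : ℕ) : ℝ)))) *
            (1 + E x) := by
  have hq0 : q ≠ 0 := Nat.one_le_iff_ne_zero.mp hq
  have hc : 0 < (q.totient : ℝ) / q := by
    have := Nat.totient_pos.mpr (Nat.pos_of_ne_zero hq0)
    positivity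
  set C := ∑ e ∈ q.divisors, (1 + Real.log e)
  refine ⟨fun x => C / (q.totient / q * Real.log x),
    tendsto_const_nhds.div_atTop (Real.tendsto_log_atTop.const_mul_atTop hc), fun x hx => ?_⟩
  have hlog : 0 < Real.log x := Real.log_pos (by linarith)
  have hcoprime := (abs_sub_le_iff.mp (abs_sum_Icc_coprime_inv_sub_le hq0 (by linarith : 1 ≤ x))).1
  change _ ≤ _ * (∏' p : Nat.Primes, (1 + psi p)) * _
  calc _ ≤ _ := sum_sq_div_totient_cube_le q ⌊x⌋₊
    _ ≤ (q.totient / q * Real.log x + C) * ∏' p : Nat.Primes, (1 + psi p) :=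
        mul_le_mul (by linarith) (sum_psiSquarefree_le_tprod _)
          (sum_nonneg fun b _ => psiSquarefree_nonneg b) (by positivity)
    _ = _ := by field_simp
end

section
/- For real H with 0 < H ≤ 1 and real x ≥ 2, ∑_{p < exp(1/H)} (1/p) | (p^{-iH} - 1)/(-iH log p) - 1 |² = O(1) and ∑_{exp(1/H) ≤ p < x} 1/p = O(log⁺(H log x) + 1), where the sums are over primes p. -/
/-!
When `H log p ≤ 1`, the bound `‖e^z - 1 - z‖ ≤ ‖z‖²` for `‖z‖ ≤ 1` makes the `p`-th term of the
first sum at most `H log p / p`. Mertens' estimate `∑_{p ≤ y} log p / p ≤ log y + log 4`, which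
follows from `log n! ≥ ∑_{p ≤ n} ⌊n / p⌋ log p` and Chebyshev's `θ(n) ≤ n log 4`, then bounds the
first sum by `1 + H log 4` at `y = e^{1/H}`. For the second sum, Mertens' estimate gives
`∑_{z ≤ p < z²} 1 / p ≤ 2 + log 4 / log z`, and `[e^{1/H}, x)` is covered by the
`O(log⁺(H log x) + 1)` intervals `[e^{2^j/H}, e^{2^{j+1}/H})`.
-/

open Finset Real
open scoped Nat Chebyshev

theorem sum_primesLE_div_mul_log_le_log_factorial (n : ℕ) :
    ∑ p ∈ Nat.primesLE n, ((n / p : ℕ) : ℝ) * log p ≤ log (n ! : ℕ) := by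
  have hsupp : (n !).factorization.support ⊆ Nat.primesLE n := by
    intro p hp
    rw [Nat.support_factorization, Nat.mem_primeFactors] at hp
    exact Nat.mem_primesLE.mpr ⟨(hp.1.dvd_factorial).mp hp.2.1, hp.1⟩
  rw [log_nat_eq_sum_factorization, Finsupp.sum_of_support_subset _ hsupp _ (by simp)]
  gcongr with p hp
  rw [Nat.factorization_factorial (Nat.prime_of_mem_primesLE hp) (lt_add_of_pos_right _ two_pos)]
  simpa using single_le_sum (f := fun i ↦ n / p ^ i) (fun _ _ ↦ Nat.zero_le _)
    (by simp : 1 ∈ Ico 1 (Nat.log p n + 2))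

theorem sum_primesLE_log_div_le (n : ℕ) :
    ∑ p ∈ Nat.primesLE n, log p / p ≤ log n + log 4 := by
  rcases n.eq_zero_or_pos with rfl | hn
  · simp [Nat.primesLE_zero]; positivity
  have hn' : (0 : ℝ) < n := by exact_mod_cast hn
  have key : n * ∑ p ∈ Nat.primesLE n, log p / p ≤ n * (log n + log 4) := calc
    n * ∑ p ∈ Nat.primesLE n, log p / p = ∑ p ∈ Nat.primesLE n, (n / p : ℝ) * log p := by
      rw [mul_sum]; congr! 1 with p; ring
    _ ≤ ∑ p ∈ Nat.primesLE n, (((n / p : ℕ) : ℝ) + 1) * log p := by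
      gcongr with p hp
      rw [← Nat.floor_div_eq_div (K := ℝ)]
      exact (Nat.lt_floor_add_one _).le
    _ = ∑ p ∈ Nat.primesLE n, ((n / p : ℕ) : ℝ) * log p + θ n := by
      simp only [add_mul, one_mul, sum_add_distrib, Chebyshev.theta_eq_sum_primesLE_log]
    _ ≤ log (n ! : ℕ) + log 4 * n :=
      add_le_add (sum_primesLE_div_mul_log_le_log_factorial n)
        (Chebyshev.theta_le_log4_mul_x hn'.le)
    _ ≤ log ((n ^ n : ℕ) : ℝ) + log 4 * n := by
      gcongr
      exact_mod_cast n.factorial_le_pow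
    _ = n * (log n + log 4) := by push_cast; rw [log_pow]; ring
  exact le_of_mul_le_mul_left key hn'

theorem sum_primesLE_floor_log_div_le {y : ℝ} (hy : 1 ≤ y) :
    ∑ p ∈ Nat.primesLE ⌊y⌋₊, log p / p ≤ log y + log 4 := by
  grw [sum_primesLE_log_div_le, Nat.floor_le (by positivity)]
  exact_mod_cast Nat.floor_pos.mpr hy

noncomputable def primesIco (a b : ℝ) : Finset ℕ :=
  (Finset.range ⌈b⌉₊).filter (fun p : ℕ => p.Prime ∧ a ≤ (p : ℝ) ∧ (p : ℝ) < b)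

@[simp]
theorem mem_primesIco {a b : ℝ} {p : ℕ} : p ∈ primesIco a b ↔ p.Prime ∧ a ≤ p ∧ p < b := by
  simp only [primesIco, mem_filter, mem_range, and_iff_right_iff_imp]
  exact fun h ↦ Nat.lt_ceil.mpr h.2.2

@[simp]
theorem primesIco_self (a : ℝ) : primesIco a a = ∅ := by
  ext p
  simp only [mem_primesIco, notMem_empty, iff_false]
  exact fun ⟨_, hap, hpa⟩ ↦ hap.not_gt hpa

theorem primesIco_subset_primesIco_right {a b c : ℝ} (hbc : b ≤ c) :
    primesIco a b ⊆ primesIco a c := by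
  intro p
  simp only [mem_primesIco]
  exact fun ⟨hp, hap, hpb⟩ ↦ ⟨hp, hap, hpb.trans_le hbc⟩

theorem primesIco_subset_primesLE_floor (a b : ℝ) : primesIco a b ⊆ Nat.primesLE ⌊b⌋₊ := by
  intro p
  simp only [mem_primesIco, Nat.mem_primesLE]
  exact fun ⟨hp, _, hpb⟩ ↦ ⟨Nat.le_floor hpb.le, hp⟩

theorem primesIco_subset_union (a b c : ℝ) :
    primesIco a c ⊆ primesIco a b ∪ primesIco b c := by
  intro p
  simp only [mem_primesIco, mem_union]
  intro ⟨hp, hap, hpc⟩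
  by_cases hpb : (p : ℝ) < b
  · exact .inl ⟨hp, hap, hpb⟩
  · exact .inr ⟨hp, not_lt.mp hpb, hpc⟩

theorem sum_primesIco_le_sum_range {g : ℕ → ℝ} (hg : ∀ p, 0 ≤ g p) (f : ℕ → ℝ) (J : ℕ) :
    ∑ p ∈ primesIco (f 0) (f J), g p ≤ ∑ j ∈ range J, ∑ p ∈ primesIco (f j) (f (j + 1)), g p := by
  induction J with
  | zero => simp
  | succ J ih =>
    calc ∑ p ∈ primesIco (f 0) (f (J + 1)), g p
        ≤ ∑ p ∈ primesIco (f 0) (f J) ∪ primesIco (f J) (f (J + 1)), g p :=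
          sum_le_sum_of_subset_of_nonneg (primesIco_subset_union _ _ _) fun p _ _ ↦ hg p
      _ ≤ ∑ p ∈ primesIco (f 0) (f J), g p + ∑ p ∈ primesIco (f J) (f (J + 1)), g p :=
          (le_add_of_nonneg_right (sum_nonneg fun p _ ↦ hg p)).trans_eq sum_union_inter
      _ ≤ _ := by rw [sum_range_succ]; gcongr

theorem sum_primesIco_sq_one_div_le {z : ℝ} (hz : 1 < z) :
    ∑ p ∈ primesIco z (z ^ 2), (1 : ℝ) / p ≤ 2 + log 4 / log z := by
  have hlogz : 0 < log z := log_pos hz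
  calc ∑ p ∈ primesIco z (z ^ 2), (1 : ℝ) / p
      ≤ ∑ p ∈ primesIco z (z ^ 2), log p / p / log z := by
        refine sum_le_sum fun p hp ↦ ?_
        obtain ⟨-, hzp, -⟩ := mem_primesIco.mp hp
        have hp0 : (0 : ℝ) < p := zero_lt_one.trans (hz.trans_le hzp)
        rw [le_div_iff₀ hlogz, one_div_mul_eq_div, div_le_div_iff_of_pos_right hp0]
        exact log_le_log (zero_lt_one.trans hz) hzp
    _ ≤ ∑ p ∈ Nat.primesLE ⌊z ^ 2⌋₊, log p / p / log z :=
        sum_le_sum_of_subset_of_nonneg (primesIco_subset_primesLE_floor _ _) fun p _ _ ↦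
          div_nonneg (div_nonneg (log_natCast_nonneg p) p.cast_nonneg) hlogz.le
    _ ≤ (log (z ^ 2) + log 4) / log z := by
        rw [← sum_div]
        gcongr
        exact sum_primesLE_floor_log_div_le (one_le_pow₀ hz.le)
    _ = 2 + log 4 / log z := by rw [log_pow]; field_simp; ring

theorem Complex.norm_exp_sub_one_div_sub_one_le {z : ℂ} (hz0 : z ≠ 0) (hz : ‖z‖ ≤ 1) :
    ‖(exp z - 1) / z - 1‖ ≤ ‖z‖ := by
  have hrw : (exp z - 1) / z - 1 = (exp z - 1 - z) / z := by field_simp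
  rw [hrw, norm_div, div_le_iff₀ (norm_pos_iff.mpr hz0), ← sq]
  exact norm_exp_sub_one_sub_id_le hz

open Complex in
theorem norm_natCast_cpow_sub_one_div_sub_one_le {H : ℝ} {p : ℕ} (hH : 0 < H) (hp : 1 < p)
    (h : H * Real.log p ≤ 1) :
    ‖((p : ℂ) ^ (-(H : ℂ) * I) - 1) / (-I * (H : ℂ) * (Real.log p : ℂ)) - 1‖ ≤ H * Real.log p := by
  have hlogp : 0 < Real.log p := Real.log_pos (by exact_mod_cast hp)
  set z : ℂ := -I * (H : ℂ) * (Real.log p : ℂ)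
  have hz : ‖z‖ = H * Real.log p := by
    simp only [z, norm_mul, norm_neg, norm_I, norm_real, Real.norm_eq_abs, abs_of_pos hH,
      abs_of_pos hlogp, one_mul]
  have hcpow : (p : ℂ) ^ (-(H : ℂ) * I) = exp z := by
    rw [cpow_def_of_ne_zero (by exact_mod_cast (zero_lt_one.trans hp).ne'), ← ofReal_natCast,
      ← ofReal_log p.cast_nonneg]
    congr 1
    ring
  rw [hcpow, ← hz]
  exact Complex.norm_exp_sub_one_div_sub_one_le (norm_pos_iff.mp (hz ▸ by positivity)) (hz ▸ h)

open Complex in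
theorem sum_one_div_mul_norm_cpow_sub_one_div_sub_one_sq_le {H y : ℝ} (hH : 0 < H) (hy : 1 ≤ y)
    (hHy : H * Real.log y ≤ 1) :
    ∑ p ∈ (Finset.range ⌈y⌉₊).filter (fun p : ℕ => p.Prime ∧ (p : ℝ) < y),
        (1 / (p : ℝ)) *
          ‖((p : ℂ) ^ (-(H : ℂ) * I) - 1) / (-I * (H : ℂ) * (Real.log p : ℂ)) - 1‖ ^ 2
      ≤ H * (Real.log y + Real.log 4) := by
  have hsub : (Finset.range ⌈y⌉₊).filter (fun p : ℕ => p.Prime ∧ (p : ℝ) < y) ⊆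
      Nat.primesLE ⌊y⌋₊ := by
    intro p hp
    simp only [mem_filter, Nat.mem_primesLE] at hp ⊢
    exact ⟨Nat.le_floor hp.2.2.le, hp.2.1⟩
  calc _ ≤ ∑ p ∈ (Finset.range ⌈y⌉₊).filter (fun p : ℕ => p.Prime ∧ (p : ℝ) < y),
        H * (Real.log p / p) := by
        refine sum_le_sum fun p hp ↦ ?_
        obtain ⟨-, hp, hpy⟩ := mem_filter.mp hp
        have hp0 : (0 : ℝ) < p := by exact_mod_cast hp.pos
        have hHp : H * Real.log p ≤ 1 :=
          hHy.trans' (by gcongr)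
        have hHp0 : 0 ≤ H * Real.log p := mul_nonneg hH.le (Real.log_natCast_nonneg p)
        calc _ ≤ 1 / (p : ℝ) * (H * Real.log p) ^ 2 := by
              gcongr
              exact norm_natCast_cpow_sub_one_div_sub_one_le hH hp.one_lt hHp
          _ ≤ 1 / (p : ℝ) * (H * Real.log p) := by
              gcongr
              exact pow_le_of_le_one hHp0 hHp two_ne_zero
          _ = H * (Real.log p / p) := by ring
    _ ≤ ∑ p ∈ Nat.primesLE ⌊y⌋₊, H * (Real.log p / p) :=
        sum_le_sum_of_subset_of_nonneg hsub fun p _ _ ↦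
          mul_nonneg hH.le (div_nonneg (Real.log_natCast_nonneg p) p.cast_nonneg)
    _ ≤ H * (Real.log y + Real.log 4) := by
        rw [← mul_sum]
        gcongr
        exact sum_primesLE_floor_log_div_le hy

theorem sum_primesIco_exp_one_div_le {H x : ℝ} (hH : 0 < H) (hx : 1 < x) :
    ∑ p ∈ primesIco (exp (1 / H)) x, (1 : ℝ) / p
      ≤ (2 + H * log 4) * (max 0 (log (H * log x)) / log 2 + 1) := by
  set s := max 0 (log (H * log x))
  set J := ⌈s / log 2⌉₊
  set f : ℕ → ℝ := fun j ↦ exp (2 ^ j / H) with hf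
  have hlog2 : 0 < log 2 := log_pos one_lt_two
  have hxJ : x ≤ f J := by
    have hHx : 0 < H * log x := mul_pos hH (log_pos hx)
    calc x = exp (H * log x / H) := by rw [mul_div_cancel_left₀ _ hH.ne', exp_log (by linarith)]
      _ ≤ exp (2 ^ J / H) := by
        gcongr
        calc H * log x = exp (log (H * log x)) := (exp_log hHx).symm
          _ ≤ exp (J * log 2) := by
            gcongr
            exact (le_max_right _ _).trans ((div_le_iff₀ hlog2).mp (Nat.le_ceil _))
          _ = 2 ^ J := by rw [exp_nat_mul, exp_log two_pos]
  have hblock : ∀ j, ∑ p ∈ primesIco (f j) (f (j + 1)), (1 : ℝ) / p ≤ 2 + H * log 4 := by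
    intro j
    have hsq : f (j + 1) = f j ^ 2 := by simp only [hf, ← exp_nat_mul]; ring_nf
    rw [hsq]
    refine (sum_primesIco_sq_one_div_le (one_lt_exp_iff.mpr (by positivity))).trans ?_
    rw [log_exp, div_div_eq_mul_div, mul_comm]
    gcongr
    exact div_le_self (by positivity) (one_le_pow₀ one_le_two)
  calc ∑ p ∈ primesIco (exp (1 / H)) x, (1 : ℝ) / p
      ≤ ∑ p ∈ primesIco (f 0) (f J), (1 : ℝ) / p := by
        refine sum_le_sum_of_subset_of_nonneg ?_ fun p _ _ ↦ by positivity
        simpa [hf] using primesIco_subset_primesIco_right hxJ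
    _ ≤ ∑ j ∈ range J, ∑ p ∈ primesIco (f j) (f (j + 1)), (1 : ℝ) / p :=
        sum_primesIco_le_sum_range (fun p ↦ by positivity) f J
    _ ≤ ∑ j ∈ range J, (2 + H * log 4) := sum_le_sum fun j _ ↦ hblock j
    _ ≤ (2 + H * log 4) * (s / log 2 + 1) := by
        rw [sum_const, card_range, nsmul_eq_mul, mul_comm]
        gcongr
        exact (Nat.ceil_lt_add_one (by positivity)).le

/-- For 0 < H ≤ 1 and x ≥ 2:
∑_{p < e^{1/H}} (1/p)|(p^{-iH}-1)/(-iH log p) - 1|² = O(1), and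
∑_{e^{1/H} ≤ p < x} 1/p = O(log⁺(H log x) + 1). -/
theorem stmt_18 :
    ∃ C : ℝ, 0 < C ∧ ∀ H x : ℝ, 0 < H → H ≤ 1 → 2 ≤ x →
      (∑ p ∈ (Finset.range ⌈Real.exp (1 / H)⌉₊).filter
            (fun p : ℕ => p.Prime ∧ (p : ℝ) < Real.exp (1 / H)),
          (1 / (p : ℝ)) *
            (‖
              (((p : ℂ) ^ (-(H : ℂ) * Complex.I) - 1) /
                  (-Complex.I * (H : ℂ) * (Real.log p : ℂ)) - 1)‖) ^ 2
        ≤ C) ∧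
      (∑ p ∈ (Finset.range ⌈x⌉₊).filter
            (fun p : ℕ => p.Prime ∧ Real.exp (1 / H) ≤ (p : ℝ) ∧ (p : ℝ) < x),
          (1 : ℝ) / p
        ≤ C * (max 0 (Real.log (H * Real.log x)) + 1)) := by
  refine ⟨6, by norm_num, fun H x hH hH1 hx ↦ ?_⟩
  have hlog2 : 2 / 3 ≤ log 2 := by linarith [log_two_gt_d9]
  have hlog4 : log 4 ≤ 2 := by
    rw [show (4 : ℝ) = 2 ^ 2 by norm_num, log_pow, Nat.cast_ofNat]
    linarith [log_two_lt_d9]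
  have hHlog4 : H * log 4 ≤ 2 := by
    simpa using mul_le_mul hH1 hlog4 (log_nonneg (by norm_num)) zero_le_one
  refine ⟨?_, ?_⟩
  · refine (sum_one_div_mul_norm_cpow_sub_one_div_sub_one_sq_le hH (one_le_exp (by positivity))
      (by rw [log_exp, mul_one_div_cancel hH.ne'])).trans ?_
    rw [log_exp, mul_add, mul_one_div_cancel hH.ne']
    linarith
  · set s := max 0 (log (H * log x))
    have hs : 0 ≤ s := le_max_left _ _
    calc _ ≤ (2 + H * log 4) * (s / log 2 + 1) :=
          sum_primesIco_exp_one_div_le hH (by linarith)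
      _ ≤ 4 * (s / (2 / 3) + 1) := by gcongr; linarith
      _ ≤ 6 * (s + 1) := by linarith
end
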